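/- arXiv:2202.00520 — 5 statements merged into one kernel-verified Lean document; each statement's English description precedes it below -/
import Mathlib

section
/- For a nonsingular n×n matrix A over a field (or commutative ring where A is invertible), and vectors v, w of length n, the adjugate matrices satisfy adj(A)·v = adj(A + v·wᵀ)·v. -/
open Matrix Polynomial

private lemma vecMulVec_mulVec_aux {n : ℕ} {R : Type*} [CommRing R]
    (u w x : Fin n → R) : vecMulVec u w *ᵥ x = (w ⬝ᵥ x) • u := by
  ext i
  simp [vecMulVec_apply, mulVec, dotProduct, Finset.mul_sum, Finset.sum_mul,
    mul_assoc, mul_comm, mul_left_comm]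

private lemma map_vecMulVec_aux {n : ℕ} {R S : Type*} [CommRing R] [CommRing S]
    (f : R →+* S) (u w : Fin n → R) :
    (vecMulVec u w).map f = vecMulVec (f ∘ u) (f ∘ w) := by
  ext i j
  simp [vecMulVec_apply]

private lemma map_det_aux {n : ℕ} {R S : Type*} [CommRing R] [CommRing S]
    (f : R →+* S) (M : Matrix (Fin n) (Fin n) R) :
    (M.map f).det = f M.det := by
  rw [RingHom.map_det, RingHom.mapMatrix_apply]

private lemma map_adjugate_aux {n : ℕ} {R S : Type*} [CommRing R] [CommRing S]
    (f : R →+* S) (M : Matrix (Fin n) (Fin n) R) :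
    M.adjugate.map f = (M.map f).adjugate := by
  have := f.map_adjugate M
  rwa [RingHom.mapMatrix_apply, RingHom.mapMatrix_apply] at this

private lemma adjugate_key {n : ℕ} {R : Type*} [CommRing R] [IsDomain R]
    (A : Matrix (Fin n) (Fin n) R) (u w : Fin n → R) (hA : IsUnit A.det)
    (hB : (A + vecMulVec u w).det ≠ 0) :
    A.adjugate *ᵥ u = (A + vecMulVec u w).adjugate *ᵥ u := by
  set B := A + vecMulVec u w with hBdef
  have hAdjInv : A.det • (A⁻¹ *ᵥ u) = A.adjugate *ᵥ u := by
    rw [Matrix.inv_def, smul_mulVec, smul_smul, Ring.mul_inverse_cancel _ hA, one_smul]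
  have hd : B.det = A.det + w ⬝ᵥ (A.adjugate *ᵥ u) := by
    have h1 : B = A + replicateCol (Fin 1) u * replicateRow (Fin 1) w := by
      rw [hBdef, vecMulVec_eq (ι := Fin 1)]
      rfl
    rw [h1, det_add_mul (replicateCol (Fin 1) u) (replicateRow (Fin 1) w) hA, det_fin_one]
    have hMdd : (replicateRow (Fin 1) w * A⁻¹ * replicateCol (Fin 1) u) 0 0 = w ⬝ᵥ (A⁻¹ *ᵥ u) := by
      simp only [Matrix.mul_apply, Matrix.replicateRow_apply, Matrix.replicateCol_apply, dotProduct, mulVec,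
        Finset.sum_mul, Finset.mul_sum, mul_assoc]
      rw [Finset.sum_comm]
    rw [Matrix.add_apply, Matrix.one_apply_eq, hMdd, mul_add, mul_one, ← hAdjInv,
      dotProduct_smul, smul_eq_mul]
  have hx : B *ᵥ (A.adjugate *ᵥ u) = B.det • u := by
    rw [hBdef, add_mulVec, mulVec_mulVec, mul_adjugate, smul_mulVec, one_mulVec,
      vecMulVec_mulVec_aux, hd, add_smul]
  have h3 : B.det • (A.adjugate *ᵥ u) = B.det • (B.adjugate *ᵥ u) := by
    calc B.det • (A.adjugate *ᵥ u) = (B.adjugate * B) *ᵥ (A.adjugate *ᵥ u) := by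
          rw [adjugate_mul, smul_mulVec, one_mulVec]
      _ = B.adjugate *ᵥ (B *ᵥ (A.adjugate *ᵥ u)) := by rw [← mulVec_mulVec]
      _ = B.det • (B.adjugate *ᵥ u) := by rw [hx, mulVec_smul]
  ext i
  have := congrFun h3 i
  simp only [Pi.smul_apply, smul_eq_mul] at this
  exact mul_left_cancel₀ hB this

theorem adjugate_rankOneUpdate_mulVec {n : ℕ} {K : Type*} [Field K]
    (A : Matrix (Fin n) (Fin n) K) (v w : Fin n → K) (hA : A.det ≠ 0) :
    A.adjugate *ᵥ v = (A + Matrix.vecMulVec v w).adjugate *ᵥ v := by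
  classical
  set A' : Matrix (Fin n) (Fin n) K[X] := A.map (C : K →+* K[X]) with hA'def
  set u : Fin n → K[X] := fun i => X * C (v i) with hudef
  set w' : Fin n → K[X] := fun i => C (w i) with hw'def
  have hA' : IsUnit A'.det := by
    rw [hA'def, map_det_aux]
    exact isUnit_C.2 (isUnit_iff_ne_zero.2 hA)
  have hB' : (A' + vecMulVec u w').det ≠ 0 := by
    intro h
    apply hA
    have h0 : ((A' + vecMulVec u w').map (evalRingHom (0 : K))).det = 0 := by
      rw [map_det_aux, h, map_zero]
    have hm : (A' + vecMulVec u w').map (evalRingHom (0 : K)) = A := by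
      rw [Matrix.map_add _ (fun a b => map_add _ a b), map_vecMulVec_aux]
      have h1 : A'.map (⇑(evalRingHom (0 : K))) = A := by
        ext i j; simp [hA'def]
      have h2 : (vecMulVec (⇑(evalRingHom (0 : K)) ∘ u) (⇑(evalRingHom (0 : K)) ∘ w'))
          = 0 := by
        ext i j; simp [hudef, hw'def, vecMulVec_apply]
      rw [h1, h2, add_zero]
    rwa [hm] at h0
  have key := adjugate_key A' u w' hA' hB'
  have hu1 : ⇑(evalRingHom (1 : K)) ∘ u = v := by
    ext j; simp [hudef]
  have hA1 : A'.map (⇑(evalRingHom (1 : K))) = A := by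
    ext i j; simp [hA'def]
  have hw1 : ⇑(evalRingHom (1 : K)) ∘ w' = w := by
    ext j; simp [hw'def]
  have hB1 : (A' + vecMulVec u w').map (⇑(evalRingHom (1 : K))) = A + vecMulVec v w := by
    rw [Matrix.map_add _ (fun a b => map_add _ a b), map_vecMulVec_aux, hA1, hu1, hw1]
  ext i
  have h := congrArg (evalRingHom (1 : K)) (congrFun key i)
  rw [RingHom.map_mulVec, RingHom.map_mulVec, map_adjugate_aux, map_adjugate_aux,
    hA1, hB1, hu1] at h
  exact h
end

section
/- For a nonsingular n×n matrix A and vectors v, w of length n, the adjugate matrices satisfy wᵀ·adj(A) = wᵀ·adj(A + v·wᵀ). -/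
open Matrix

lemma vecMul_adjugate_eq_det_updateRow {n : ℕ} {K : Type*} [Field K]
    (A : Matrix (Fin n) (Fin n) K) (w : Fin n → K) (j : Fin n) :
    (w ᵥ* A.adjugate) j = (A.updateRow j w).det := by
  have h : w ᵥ* A.adjugate = Aᵀ.cramer w := by
    rw [cramer_eq_adjugate_mulVec, ← Matrix.adjugate_transpose, Matrix.mulVec_transpose]
  rw [h, cramer_transpose_apply]

lemma det_updateRow_add_vecMulVec {n : ℕ} {K : Type*} [Field K]
    (A : Matrix (Fin n) (Fin n) K) (v w : Fin n → K) (j : Fin n) :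
    ((A + Matrix.vecMulVec v w).updateRow j w).det = (A.updateRow j w).det := by
  set u : Fin n → K := Function.update v j 0 with hu
  set N := A.updateRow j w with hN
  have key : (A + Matrix.vecMulVec v w).updateRow j w
      = (1 + Matrix.vecMulVec u (Pi.single j 1)) * N := by
    ext i k
    rw [Matrix.add_mul, Matrix.one_mul]
    simp only [Matrix.add_apply, Matrix.mul_apply, Matrix.vecMulVec_apply]
    have : ∀ l, u i * (Pi.single j 1 : Fin n → K) l * N l k
        = if l = j then u i * N j k else 0 := by
      intro l
      rcases eq_or_ne l j with h | h <;> simp [h, Pi.single_apply]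
    rw [Finset.sum_congr rfl fun l _ => this l, Finset.sum_ite_eq' _ j]
    rcases eq_or_ne i j with h | h
    · simp [h, hu, hN]
    · simp [h, hu, hN, Function.update_apply, Matrix.updateRow_apply, Matrix.vecMulVec_apply, mul_comm]
  rw [key, Matrix.det_mul, Matrix.vecMulVec_eq (Fin 1), Matrix.det_one_add_replicateCol_mul_replicateRow]
  simp [hu]

theorem vecMul_adjugate_rankOneUpdate {n : ℕ} {K : Type*} [Field K]
    (A : Matrix (Fin n) (Fin n) K) (v w : Fin n → K) (hA : A.det ≠ 0) :
    w ᵥ* A.adjugate = w ᵥ* (A + Matrix.vecMulVec v w).adjugate := by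
  ext j
  rw [vecMul_adjugate_eq_det_updateRow, vecMul_adjugate_eq_det_updateRow,
    det_updateRow_add_vecMulVec]
end

section
/- If A is nonsingular and Â = A + v·wᵀ is also nonsingular, then the vectors x' := det(A)·A⁻¹·v and x'' := det(Â)·Â⁻¹·v are equal. -/
open Matrix

lemma vecMulVec_mulVec' {n : ℕ} {K : Type*} [Field K] (v w x : Fin n → K) :
    Matrix.vecMulVec v w *ᵥ x = (w ⬝ᵥ x) • v := by
  funext i
  simp [mulVec, vecMulVec_apply, dotProduct, Finset.mul_sum, mul_comm, mul_assoc, mul_left_comm]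

theorem det_smul_inv_mulVec_eq_of_rankOneUpdate {n : ℕ} {K : Type*} [Field K]
    (A : Matrix (Fin n) (Fin n) K) (v w : Fin n → K)
    (hA : A.det ≠ 0) (hA' : (A + Matrix.vecMulVec v w).det ≠ 0) :
    A.det • (A⁻¹ *ᵥ v) =
      (A + Matrix.vecMulVec v w).det • ((A + Matrix.vecMulVec v w)⁻¹ *ᵥ v) := by
  set B := A + Matrix.vecMulVec v w with hB
  set c : K := w ⬝ᵥ (A⁻¹ *ᵥ v) with hc
  have hdet : B.det = A.det * (1 + c) := by
    rw [hB, vecMulVec_eq Unit v w, det_add_replicateCol_mul_replicateRow (isUnit_iff_ne_zero.2 hA)]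
    congr 1
    rw [det_unique]
    rw [Matrix.add_apply, Matrix.one_apply_eq]
    congr 1
    simp only [Matrix.mul_apply, Matrix.replicateRow_apply, Matrix.replicateCol_apply, Finset.sum_mul, mul_assoc]
    rw [Finset.sum_comm]
    simp [hc, dotProduct, mulVec, Finset.mul_sum]
  have hmul : B *ᵥ (A⁻¹ *ᵥ v) = (1 + c) • v := by
    rw [hB, add_mulVec, mulVec_mulVec, mul_nonsing_inv A (isUnit_iff_ne_zero.2 hA), one_mulVec,
      vecMulVec_mulVec', add_smul, one_smul, hc]
  have key : (1 + c) • (B⁻¹ *ᵥ v) = A⁻¹ *ᵥ v := by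
    have := congrArg (fun x => B⁻¹ *ᵥ x) hmul
    simpa [mulVec_mulVec, Matrix.nonsing_inv_mul B (isUnit_iff_ne_zero.2 hA'), Matrix.mulVec_smul,
      ← Matrix.mul_assoc, Matrix.one_mul] using this.symm
  rw [hdet, mul_smul, key]
end

section
/- The adjugate of a nonsingular matrix A and the adjugate of its rank-one update A + v·wᵀ satisfy adj(A + v·wᵀ) = adj(A) + (wᵀ·adj(A)·v)·A⁻¹ − adj(A)·v·wᵀ·A⁻¹. -/
open Matrix

private lemma vecMulVec_mul_vecMulVec' {n : ℕ} {R : Type*} [CommRing R] (u w x y : Fin n → R) :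
    vecMulVec u w * vecMulVec x y = (w ⬝ᵥ x) • vecMulVec u y := by
  ext i j
  simp only [mul_apply, vecMulVec_apply, Matrix.smul_apply, smul_eq_mul, dotProduct, Finset.sum_mul]
  exact Finset.sum_congr rfl fun k _ => by ring

private lemma adjugate_one_add_vecMulVec_of_ne {n : ℕ} {F : Type*} [Field F] (u w : Fin n → F)
    (h : (1 : F) + w ⬝ᵥ u ≠ 0) :
    adjugate (1 + vecMulVec u w) =
      ((1 : F) + w ⬝ᵥ u) • (1 : Matrix (Fin n) (Fin n) F) - vecMulVec u w := by
  set M : Matrix (Fin n) (Fin n) F := 1 + vecMulVec u w with hM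
  have hdet : M.det = 1 + w ⬝ᵥ u := by
    rw [hM, vecMulVec_eq (Fin 1), det_one_add_replicateCol_mul_replicateRow]
  have hu : IsUnit M.det := by rw [hdet]; exact h.isUnit
  set N : Matrix (Fin n) (Fin n) F := ((1 : F) + w ⬝ᵥ u) • 1 - vecMulVec u w with hN
  have hMN : M * N = M.det • 1 := by
    rw [hM, hN, hdet, mul_sub, Matrix.mul_smul, mul_one, add_mul, one_mul,
      vecMulVec_mul_vecMulVec']
    module
  have h1 : M⁻¹ * (M * N) = M⁻¹ * (M.det • 1) := by rw [hMN]
  rw [← Matrix.mul_assoc, Matrix.nonsing_inv_mul M hu, Matrix.one_mul, Matrix.mul_smul,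
    Matrix.mul_one] at h1
  rw [h1, Matrix.inv_def, smul_smul, Ring.inverse_eq_inv', hdet, mul_inv_cancel₀ h, one_smul]

private lemma mapMatrix_one_add_vecMulVec {n : ℕ} {R S : Type*} [CommRing R] [CommRing S]
    (f : R →+* S) (a b : Fin n → R) :
    f.mapMatrix (1 + vecMulVec a b) = 1 + vecMulVec (f ∘ a) (f ∘ b) := by
  ext i j
  simp [Matrix.one_apply, vecMulVec_apply, apply_ite f]

private lemma mapMatrix_smul_one_sub {n : ℕ} {R S : Type*} [CommRing R] [CommRing S]
    (f : R →+* S) (c : R) (a b : Fin n → R) :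
    f.mapMatrix (c • (1 : Matrix (Fin n) (Fin n) R) - vecMulVec a b) =
      f c • (1 : Matrix (Fin n) (Fin n) S) - vecMulVec (f ∘ a) (f ∘ b) := by
  ext i j
  simp [Matrix.one_apply, vecMulVec_apply, apply_ite f, mul_ite]

private lemma map_dotProduct' {n : ℕ} {R S : Type*} [CommRing R] [CommRing S]
    (f : R →+* S) (a b : Fin n → R) : (f ∘ a) ⬝ᵥ (f ∘ b) = f (a ⬝ᵥ b) := by
  simp [dotProduct, map_sum]

private lemma adjugate_one_add_vecMulVec {n : ℕ} {K : Type*} [Field K] (u w : Fin n → K) :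
    adjugate (1 + vecMulVec u w) =
      ((1 : K) + w ⬝ᵥ u) • (1 : Matrix (Fin n) (Fin n) K) - vecMulVec u w := by
  classical
  set U : Fin n → Polynomial K := fun i => Polynomial.X * Polynomial.C (u i) with hU
  set W : Fin n → Polynomial K := fun i => Polynomial.C (w i) with hW
  have hWU : W ⬝ᵥ U = Polynomial.X * Polynomial.C (w ⬝ᵥ u) := by
    simp only [hU, hW, dotProduct, map_sum, Finset.mul_sum]
    exact Finset.sum_congr rfl fun i _ => by rw [Polynomial.C_mul]; ring
  have hne : (1 : Polynomial K) + W ⬝ᵥ U ≠ 0 := by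
    rw [hWU]
    intro hc
    have h0 := congrArg (fun p => Polynomial.coeff p 0) hc
    simp [Polynomial.mul_coeff_zero] at h0
  set f : Polynomial K →+* RatFunc K := (algebraMap (Polynomial K) (RatFunc K)) with hf
  have hinj : Function.Injective f := IsFractionRing.injective _ _
  have hne' : (1 : RatFunc K) + (f ∘ W) ⬝ᵥ (f ∘ U) ≠ 0 := by
    rw [map_dotProduct', show (1 : RatFunc K) = f 1 from (f.map_one).symm, ← f.map_add]
    intro hc
    exact hne (hinj (by rw [hc, f.map_zero]))
  have key : adjugate (1 + vecMulVec U W) =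
      ((1 : Polynomial K) + W ⬝ᵥ U) • 1 - vecMulVec U W := by
    have e1 : f.mapMatrix (adjugate (1 + vecMulVec U W)) =
        f.mapMatrix (((1 : Polynomial K) + W ⬝ᵥ U) • 1 - vecMulVec U W) := by
      rw [RingHom.map_adjugate, mapMatrix_one_add_vecMulVec,
        adjugate_one_add_vecMulVec_of_ne _ _ hne', mapMatrix_smul_one_sub,
        map_dotProduct', f.map_add, f.map_one]
    exact Matrix.ext fun i j => hinj (congrFun (congrFun e1 i) j)
  set g : Polynomial K →+* K := Polynomial.evalRingHom (1 : K) with hg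
  have e2 := congrArg (RingHom.mapMatrix g (m := Fin n)) key
  rw [RingHom.map_adjugate, mapMatrix_one_add_vecMulVec, mapMatrix_smul_one_sub] at e2
  have hgU : ⇑g ∘ U = u := by funext i; simp [hU, hg]
  have hgW : ⇑g ∘ W = w := by funext i; simp [hW, hg]
  have hgc : g (1 + W ⬝ᵥ U) = 1 + w ⬝ᵥ u := by rw [g.map_add, g.map_one, hWU]; simp [hg]
  rw [hgU, hgW, hgc] at e2
  exact e2

theorem adjugate_rankOneUpdate_formula {n : ℕ} {K : Type*} [Field K]
    (A : Matrix (Fin n) (Fin n) K) (v w : Fin n → K) (hA : A.det ≠ 0) :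
    (A + Matrix.vecMulVec v w).adjugate =
      A.adjugate + (w ⬝ᵥ (A.adjugate *ᵥ v)) • A⁻¹
        - Matrix.vecMulVec (A.adjugate *ᵥ v) w * A⁻¹ := by
  have hu : IsUnit A.det := hA.isUnit
  have hAinv : A⁻¹ = (A.det)⁻¹ • A.adjugate := by
    rw [Matrix.inv_def, Ring.inverse_eq_inv']
  have hmul_vmv : ∀ (B : Matrix (Fin n) (Fin n) K) (x : Fin n → K),
      B * vecMulVec x w = vecMulVec (B *ᵥ x) w := by
    intro B x
    ext i j
    simp only [mul_apply, vecMulVec_apply, mulVec, dotProduct, Finset.sum_mul]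
    exact Finset.sum_congr rfl fun k _ => by ring
  have hfact : A + vecMulVec v w = A * (1 + vecMulVec (A⁻¹ *ᵥ v) w) := by
    rw [mul_add, mul_one, hmul_vmv, Matrix.mulVec_mulVec, Matrix.mul_nonsing_inv A hu,
      Matrix.one_mulVec]
  have hvu : A⁻¹ *ᵥ v = (A.det)⁻¹ • (A.adjugate *ᵥ v) := by
    rw [hAinv, Matrix.smul_mulVec]
  have hsmulvmv : vecMulVec ((A.det)⁻¹ • (A.adjugate *ᵥ v)) w =
      (A.det)⁻¹ • vecMulVec (A.adjugate *ᵥ v) w := by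
    ext i j
    simp [vecMulVec_apply, mul_assoc]
  rw [hfact, Matrix.adjugate_mul_distrib, adjugate_one_add_vecMulVec, hvu,
    dotProduct_smul, hsmulvmv, hAinv]
  rw [sub_mul, smul_mul, Matrix.one_mul, smul_mul, Matrix.mul_smul]
  rw [smul_smul]
  simp only [smul_eq_mul]
  module
end

section
/- If A and A + v·wᵀ are both nonsingular, then for every k with 1 ≤ k ≤ n, the k-th row of adj(A) times v equals the k-th row of adj(A + v·wᵀ) times v; i.e., (adj(A)·v)ₖ = (adj(A + v·wᵀ)·v)ₖ componentwise. -/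
open Matrix

theorem adjugate_rankOneUpdate_mulVec_apply {n : ℕ} {K : Type*} [Field K]
    (A : Matrix (Fin n) (Fin n) K) (v w : Fin n → K)
    (hA : A.det ≠ 0) (hA' : (A + Matrix.vecMulVec v w).det ≠ 0) :
    ∀ k : Fin n, (A.adjugate *ᵥ v) k = ((A + Matrix.vecMulVec v w).adjugate *ᵥ v) k := by
  intro k
  rw [← cramer_eq_adjugate_mulVec, ← cramer_eq_adjugate_mulVec, cramer_apply, cramer_apply,
    ← det_transpose (A.updateCol k v),
    ← det_transpose ((A + Matrix.vecMulVec v w).updateCol k v)]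
  refine det_eq_of_forall_row_eq_smul_add_const (fun i => if i = k then 0 else -w i) k
    (if_pos rfl) ?_
  intro i j
  by_cases hik : i = k <;>
    simp [hik, transpose_apply, updateCol_apply, vecMulVec_apply, mul_comm]
end
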